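/- Let m be a nonnegative integer. Then Σ_{j=0}^{m} (-1)^{m-j} [m choose j]_q · q^{binom(j,2)} · (q;q)_{m-j} / (x;q)_{m-j+1} = q^{binom(m+1,2)} / (1 - x q^m), as an identity of rational functions in q and x. -/

import Mathlib

open Finset Polynomial

noncomputable def qP {K : Type*} [Field K] (a q : K) (n : ℕ) : K :=
  ∏ i ∈ Finset.range n, (1 - a * q ^ i)

noncomputable def qBin {K : Type*} [Field K] (q : K) (n k : ℕ) : K :=
  if k ≤ n then qP (q ^ (n - k + 1)) q k / qP q q k else 0

/-- The field of rational functions in two variables `q2`, `x2` over `ℚ`. -/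
noncomputable def q2 : RatFunc (RatFunc ℚ) := RatFunc.C RatFunc.X
noncomputable def x2 : RatFunc (RatFunc ℚ) := RatFunc.X

/-! Let `S_m(x)` be the left-hand side. The q-Pascal rule `[m+1, j+1] = [m, j] + q^(j+1) [m, j+1]`
splits `S_{m+1}(x)` into two sums whose terms pair up through the partial-fraction identity
`(q;q)_n / (x;q)_{n+1} - (q;q)_{n+1} / (x;q)_{n+2} = q^(n+1) (q;q)_n / (xq;q)_{n+1}`,
giving `S_{m+1}(x) = q^(m+1) S_m(xq)`. Induction on `m` from `S_0(x) = 1 / (1 - x)` then yields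
the closed form in any field where `q` is not a root of unity and no `x q^k` equals `1`. -/

section
variable {K : Type*} [Field K]

lemma qP_succ (a q : K) (n : ℕ) : qP a q (n + 1) = qP a q n * (1 - a * q ^ n) :=
  prod_range_succ _ _

lemma qP_succ' (a q : K) (n : ℕ) : qP a q (n + 1) = (1 - a) * qP (a * q) q n := by
  simp only [qP, prod_range_succ', pow_zero, mul_one, pow_succ', mul_assoc, mul_comm (1 - a)]

lemma qP_ne_zero {a q : K} (h : ∀ i, a * q ^ i ≠ 1) (n : ℕ) : qP a q n ≠ 0 :=
  prod_ne_zero_iff.2 fun i _ => sub_ne_zero.2 (h i).symm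

lemma qBin_of_le (q : K) {n k : ℕ} (h : k ≤ n) :
    qBin q n k = qP (q ^ (n - k + 1)) q k / qP q q k := if_pos h

lemma qBin_of_lt (q : K) {n k : ℕ} (h : n < k) : qBin q n k = 0 := if_neg (by omega)

lemma qBin_zero_right (q : K) (n : ℕ) : qBin q n 0 = 1 := by
  simp [qBin_of_le, qP]

variable {q x : K}

lemma qP_self_ne_zero (hq : ∀ k, q ^ (k + 1) ≠ 1) (n : ℕ) : qP q q n ≠ 0 :=
  qP_ne_zero (fun i => by rw [← pow_succ']; exact hq i) n

lemma qBin_self (hq : ∀ k, q ^ (k + 1) ≠ 1) (n : ℕ) : qBin q n n = 1 := by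
  rw [qBin_of_le q le_rfl, Nat.sub_self, zero_add, pow_one, div_self (qP_self_ne_zero hq n)]

lemma qBin_succ_succ (hq : ∀ k, q ^ (k + 1) ≠ 1) {m j : ℕ} (hj : j ≤ m) :
    qBin q (m + 1) (j + 1) = qBin q m j + q ^ (j + 1) * qBin q m (j + 1) := by
  rcases hj.eq_or_lt with rfl | hlt
  · rw [qBin_self hq, qBin_self hq, qBin_of_lt q (Nat.lt_succ_self j), mul_zero, add_zero]
  obtain ⟨r, rfl⟩ := Nat.exists_eq_add_of_lt hlt
  rw [qBin_of_le q (by omega), qBin_of_le q (by omega), qBin_of_le q (by omega)]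
  have e1 : j + r + 1 + 1 - (j + 1) + 1 = r + 1 + 1 := by omega
  have e2 : j + r + 1 - j + 1 = r + 1 + 1 := by omega
  have e3 : j + r + 1 - (j + 1) + 1 = r + 1 := by omega
  rw [e1, e2, e3, qP_succ, qP_succ' (q ^ (r + 1)), ← pow_succ, qP_succ q q, ← pow_succ']
  have h1 : (1 : K) - q ^ (j + 1) ≠ 0 := sub_ne_zero.2 (hq j).symm
  have h2 := qP_self_ne_zero hq j
  field_simp
  ring

lemma sum_qBin_succ_mul (hq : ∀ k, q ^ (k + 1) ≠ 1) (f : ℕ → K) (m : ℕ) :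
    ∑ j ∈ range (m + 2), qBin q (m + 1) j * f j =
      ∑ j ∈ range (m + 1), qBin q m j * (f (j + 1) + q ^ j * f j) := by
  have shifted : ∑ j ∈ range (m + 1), q ^ j * qBin q m j * f j =
      ∑ j ∈ range (m + 1), q ^ (j + 1) * qBin q m (j + 1) * f (j + 1) + f 0 := by
    have top : ∑ j ∈ range (m + 2), q ^ j * qBin q m j * f j =
        ∑ j ∈ range (m + 1), q ^ j * qBin q m j * f j := by
      rw [sum_range_succ, qBin_of_lt q (Nat.lt_succ_self m), mul_zero, zero_mul, add_zero]
    rw [← top, sum_range_succ', pow_zero, qBin_zero_right, one_mul, one_mul]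
  rw [sum_range_succ', qBin_zero_right, one_mul]
  simp only [mul_add, sum_add_distrib]
  rw [sum_congr rfl fun j hj => by rw [qBin_succ_succ hq (Nat.lt_succ_iff.1 (mem_range.1 hj))]]
  simp only [add_mul, sum_add_distrib, ← mul_assoc, mul_comm _ (q ^ _), shifted, add_assoc]

lemma mul_mul_pow_ne_one (hx : ∀ k, x * q ^ k ≠ 1) (k : ℕ) : x * q * q ^ k ≠ 1 := by
  rw [mul_assoc, ← pow_succ']
  exact hx (k + 1)

lemma qP_div_sub_qP_succ_div (hx : ∀ k, x * q ^ k ≠ 1) (n : ℕ) :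
    qP q q n / qP x q (n + 1) - qP q q (n + 1) / qP x q (n + 2) =
      q ^ (n + 1) * (qP q q n / qP (x * q) q (n + 1)) := by
  have hxq := mul_mul_pow_ne_one hx
  have h1 : (1 : K) - x ≠ 0 := sub_ne_zero.2 (by simpa using (hx 0).symm)
  have h2 := qP_ne_zero hxq n
  have h3 : (1 : K) - x * q * q ^ n ≠ 0 := sub_ne_zero.2 (hxq n).symm
  rw [qP_succ' x q (n + 1), qP_succ' x q n, qP_succ (x * q) q n, qP_succ q q n]
  field_simp
  ring

noncomputable def qAltWeight (q x : K) (m j : ℕ) : K :=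
  (-1) ^ (m - j) * q ^ j.choose 2 * qP q q (m - j) / qP x q (m - j + 1)

/-- `S_m(x)`, with `binom(j, 2)` written as `j.choose 2`. -/
noncomputable def qAltSum (q x : K) (m : ℕ) : K :=
  ∑ j ∈ range (m + 1), qBin q m j * qAltWeight q x m j

lemma qAltWeight_succ_add (hx : ∀ k, x * q ^ k ≠ 1) {m j : ℕ} (hj : j ≤ m) :
    qAltWeight q x (m + 1) (j + 1) + q ^ j * qAltWeight q x (m + 1) j =
      q ^ (m + 1) * qAltWeight q (x * q) m j := by
  obtain ⟨n, rfl⟩ := Nat.exists_eq_add_of_le hj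
  have e1 : j + n + 1 - (j + 1) = n := by omega
  have e2 : j + n + 1 - j = n + 1 := by omega
  have e3 : j + n - j = n := by omega
  simp only [qAltWeight, e1, e2, e3, Nat.choose_succ_succ', Nat.choose_one_right]
  calc _ = (-1) ^ n * q ^ j.choose 2 * q ^ j *
        (qP q q n / qP x q (n + 1) - qP q q (n + 1) / qP x q (n + 2)) := by ring
    _ = _ := by rw [qP_div_sub_qP_succ_div hx n]; ring

lemma qAltSum_succ (hq : ∀ k, q ^ (k + 1) ≠ 1) (hx : ∀ k, x * q ^ k ≠ 1) (m : ℕ) :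
    qAltSum q x (m + 1) = q ^ (m + 1) * qAltSum q (x * q) m := by
  rw [qAltSum, sum_qBin_succ_mul hq, qAltSum, mul_sum]
  refine sum_congr rfl fun j hj => ?_
  rw [qAltWeight_succ_add hx (Nat.lt_succ_iff.1 (mem_range.1 hj))]
  ring

theorem qAltSum_eq (hq : ∀ k, q ^ (k + 1) ≠ 1) (hx : ∀ k, x * q ^ k ≠ 1) (m : ℕ) :
    qAltSum q x m = q ^ (m + 1).choose 2 / (1 - x * q ^ m) := by
  induction m generalizing x with
  | zero => simp [qAltSum, qAltWeight, qBin_zero_right, qP]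
  | succ m ih =>
    rw [qAltSum_succ hq hx, ih (mul_mul_pow_ne_one hx), Nat.choose_succ_succ' (m + 1) 1,
      Nat.choose_one_right]
    ring
end

lemma q2_pow_succ_ne_one (k : ℕ) : q2 ^ (k + 1) ≠ 1 := by
  rw [q2, ← map_pow, ← map_one RatFunc.C, RatFunc.C_injective.ne_iff, ← RatFunc.algebraMap_X,
    ← map_pow]
  intro h
  have := congrArg RatFunc.intDegree h
  rw [RatFunc.intDegree_polynomial, Polynomial.natDegree_X_pow, RatFunc.intDegree_one] at this
  omega

lemma x2_mul_q2_pow_ne_one (k : ℕ) : x2 * q2 ^ k ≠ 1 := by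
  intro h
  have := congrArg RatFunc.intDegree h
  rw [x2, q2, ← map_pow, RatFunc.intDegree_mul RatFunc.X_ne_zero (by simp [RatFunc.X_ne_zero]),
    RatFunc.intDegree_X, RatFunc.intDegree_C, RatFunc.intDegree_one] at this
  omega

theorem stmt_7 (m : ℕ) :
    ∑ j ∈ Finset.range (m + 1),
        (-1) ^ (m - j) * qBin q2 m j * q2 ^ (j * (j - 1) / 2) * qP q2 q2 (m - j) /
          qP x2 q2 (m - j + 1) =
      q2 ^ (m * (m + 1) / 2) / (1 - x2 * q2 ^ m) := by
  have h := qAltSum_eq q2_pow_succ_ne_one x2_mul_q2_pow_ne_one m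
  rw [qAltSum, Nat.choose_two_right, Nat.add_sub_cancel, mul_comm (m + 1)] at h
  rw [← h]
  refine sum_congr rfl fun j _ => ?_
  rw [qAltWeight, Nat.choose_two_right]
  ring
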